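/- There is no finite tiling of the sphere Sⁿ⁻¹ by convex spherical polytopes that contains exactly one A-type polytope; equivalently, in any partition of Sⁿ⁻¹ into convex spherical polytopes with pairwise disjoint interiors, the number of A-type polytopes is never equal to one. -/

import Mathlib

/-!
Coning off a spherical tiling gives a tiling of `ℝⁿ` by polyhedral cones in which the A-type tiles
become exactly the salient cones. We show more generally that for any integer combination of cone
tilings, the signed count of salient tiles is never the indicator of a single cone `C₀`.

Suppose it were. Pick an extreme ray `p` of `C₀` and pass, inside the hyperplane `pᗮ`, to the
tangent tilings at `p` (with the old signs) and at `-p` (with opposite signs). A non-salient tile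
whose tangent cone at `p` is salient contains the line `ℝ ∙ p`, so it looks the same from `p` and
from `-p` and cancels. Salient tiles other than `C₀` have total weight zero by hypothesis, and
`-p ∉ C₀`. So the new combination, one dimension lower, again counts a single salient cone, now
with total weight zero. In dimension `0` the only tiling is `{univ}`, and its count is the total weight, `0 ≠ 1`.
-/

open Set Metric
open scoped RealInnerProductSpace

noncomputable section

abbrev Euc (n : ℕ) : Type := EuclideanSpace ℝ (Fin n)

def unitSphere (n : ℕ) : Set (Euc n) := Metric.sphere 0 1

/-- A convex spherical polytope: the intersection of the unit sphere with finitely many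
closed halfspaces whose boundary hyperplanes pass through the origin. -/
def IsSphPolytope {n : ℕ} (Q : Set (Euc n)) : Prop :=
  ∃ C : Finset (Euc n), Q = unitSphere n ∩ ⋂ c ∈ C, {y : Euc n | 0 ≤ ⟪c, y⟫}

/-- The relative interior of a subset of the unit sphere, in the sphere. -/
def sphInterior {n : ℕ} (Q : Set (Euc n)) : Set (Euc n) :=
  {x | x ∈ Q ∧ ∃ ε > 0, ∀ y ∈ unitSphere n, dist y x < ε → y ∈ Q}

/-- A B-type set contains a pair of antipodal points of the sphere. -/
def IsBType {n : ℕ} (Q : Set (Euc n)) : Prop := ∃ x ∈ Q, -x ∈ Q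

/-- A finite tiling of the sphere by full-dimensional convex spherical polytopes with
pairwise disjoint (relative) interiors. -/
def IsSphTiling {n : ℕ} (𝒯 : Finset (Set (Euc n))) : Prop :=
  (∀ Q ∈ 𝒯, IsSphPolytope Q ∧ (sphInterior Q).Nonempty) ∧
  (⋃ Q ∈ 𝒯, Q) = unitSphere n ∧
  ∀ Q ∈ 𝒯, ∀ Q' ∈ 𝒯, Q ≠ Q' → sphInterior Q ∩ sphInterior Q' = ∅

open Module Filter Topology

lemma Convex.eventually_add_smul_mem {E : Type*} [AddCommGroup E] [Module ℝ E] {K : Set E}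
    (hK : Convex ℝ K) {w y : E} (hw : w ∈ K) {ε₀ : ℝ} (hε₀ : 0 < ε₀) (hy : w + ε₀ • y ∈ K) :
    ∀ᶠ ε in 𝓝[>] (0 : ℝ), w + ε • y ∈ K := by
  filter_upwards [Ioo_mem_nhdsGT hε₀] with ε hε
  have := hK.add_smul_mem hw hy (t := ε / ε₀)
    ⟨div_nonneg hε.1.le hε₀.le, (div_le_one hε₀).2 hε.2.le⟩
  rwa [smul_smul, div_mul_cancel₀ _ hε₀.ne'] at this

namespace PolyhedralTiling

open scoped Classical

variable {V : Type} [NormedAddCommGroup V] [InnerProductSpace ℝ V]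

def polyhedralCone (C : Finset V) : PointedCone ℝ V := PointedCone.dual (innerₗ V) (C : Set V)

def IsPolyhedralCone (K : Set V) : Prop := ∃ C : Finset V, K = polyhedralCone C

def IsSalient (K : Set V) : Prop := ∀ y ∈ K, -y ∈ K → y = 0

def tangentCone (K : Set V) (w : V) : Set V := {y | ∃ ε > (0 : ℝ), w + ε • y ∈ K}

/-- For `w ∈ K`, the lineality space of the tangent cone of `K` at `w` is `ℝ ∙ w`: when `K` is a
polyhedral cone and `w ≠ 0`, the ray through `w` is an extreme ray of `K`. -/
def IsExtremeRay (K : Set V) (w : V) : Prop :=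
  ∀ y ∈ tangentCone K w, -y ∈ tangentCone K w → ∃ t : ℝ, y = t • w

lemma exists_pos_of_eventually {p : ℝ → Prop} (h : ∀ᶠ ε in 𝓝 0, p ε) : ∃ ε > 0, p ε :=
  (((h.filter_mono nhdsWithin_le_nhds).and self_mem_nhdsWithin :
    ∀ᶠ ε in 𝓝[>] (0 : ℝ), p ε ∧ 0 < ε).exists).imp fun _ h => ⟨h.2, h.1⟩

lemma eventually_forall_inner_add_smul_pos (C : Finset V) (w y : V) :
    ∀ᶠ ε in 𝓝 (0 : ℝ), ∀ c ∈ C, 0 < ⟪c, w⟫ → 0 < ⟪c, w + ε • y⟫ :=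
  (eventually_all_finset C).2 fun c _ => eventually_imp_distrib_left.2 fun h =>
    ((by fun_prop : Continuous fun ε : ℝ => ⟪c, w + ε • y⟫).tendsto' 0 _ (by simp)).eventually
      (lt_mem_nhds h)

namespace polyhedralCone

variable {C : Finset V} {w y : V}

lemma mem_iff : y ∈ polyhedralCone C ↔ ∀ c ∈ C, 0 ≤ ⟪c, y⟫ := by
  simp [polyhedralCone]

lemma isClosed (C : Finset V) : IsClosed (polyhedralCone C : Set V) :=
  PointedCone.isClosed_dual fun x => (innerSL ℝ x).continuous

lemma interior_eq (C : Finset V) :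
    interior (polyhedralCone C : Set V) = {y | ∀ c ∈ C, c ≠ 0 → 0 < ⟪c, y⟫} := by
  apply Subset.antisymm
  · intro x hx c hc hc0
    have hnear : ∀ᶠ t in 𝓝 (0 : ℝ), x - t • c ∈ (polyhedralCone C : Set V) :=
      (by fun_prop : Continuous fun t : ℝ => x - t • c).tendsto' 0 x (by simp)
        |>.eventually (mem_interior_iff_mem_nhds.1 hx)
    obtain ⟨t, ht, hxt⟩ := exists_pos_of_eventually hnear
    have := mem_iff.1 hxt c hc
    rw [inner_sub_right, real_inner_smul_right, real_inner_self_eq_norm_sq] at this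
    have : 0 < t * ‖c‖ ^ 2 := mul_pos ht (by positivity)
    linarith
  · have hopen : IsOpen {y : V | ∀ c ∈ C, c ≠ 0 → 0 < ⟪c, y⟫} := by
      simp_rw [ofPred_forall]
      exact isOpen_biInter_finset fun c _ => isOpen_iInter_of_finite fun _ =>
        isOpen_lt continuous_const (by fun_prop)
    refine hopen.subset_interior_iff.2 fun y hy => mem_iff.2 fun c hc => ?_
    rcases eq_or_ne c 0 with rfl | hc0
    · simp
    · exact (hy c hc hc0).le

lemma mem_tangentCone_iff (hw : w ∈ polyhedralCone C) :
    y ∈ tangentCone (polyhedralCone C) w ↔ ∀ c ∈ C, ⟪c, w⟫ = 0 → 0 ≤ ⟪c, y⟫ := by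
  constructor
  · rintro ⟨ε, hε, hmem⟩ c hc hcw
    have := mem_iff.1 hmem c hc
    rw [inner_add_right, real_inner_smul_right, hcw, zero_add] at this
    exact nonneg_of_mul_nonneg_right this hε
  · intro h
    obtain ⟨ε, hε, hεC⟩ := exists_pos_of_eventually (eventually_forall_inner_add_smul_pos C w y)
    refine ⟨ε, hε, mem_iff.2 fun c hc => ?_⟩
    rcases (mem_iff.1 hw c hc).lt_or_eq with hlt | heq
    · exact (hεC c hc hlt).le
    · rw [inner_add_right, real_inner_smul_right, ← heq, zero_add]
      exact mul_nonneg hε.le (h c hc heq.symm)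

lemma subset_tangentCone (hw : w ∈ polyhedralCone C) :
    (polyhedralCone C : Set V) ⊆ tangentCone (polyhedralCone C) w :=
  fun _ hy => (mem_tangentCone_iff hw).2 fun c hc _ => mem_iff.1 hy c hc

lemma add_smul_mem_tangentCone (hw : w ∈ polyhedralCone C)
    (hy : y ∈ tangentCone (polyhedralCone C) w) (t : ℝ) :
    y + t • w ∈ tangentCone (polyhedralCone C) w := by
  rw [mem_tangentCone_iff hw] at hy ⊢
  intro c hc hcw
  rw [inner_add_right, real_inner_smul_right, hcw, mul_zero, add_zero]
  exact hy c hc hcw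

lemma tangentCone_eq_self_of_neg_mem (hw : w ∈ polyhedralCone C)
    (hw' : -w ∈ polyhedralCone C) : tangentCone (polyhedralCone C) w = polyhedralCone C := by
  refine Subset.antisymm (fun y hy => mem_iff.2 fun c hc => ?_) (subset_tangentCone hw)
  have h₁ := mem_iff.1 hw c hc
  have h₂ := mem_iff.1 hw' c hc
  rw [inner_neg_right] at h₂
  exact (mem_tangentCone_iff hw).1 hy c hc (by linarith)

end polyhedralCone

lemma orthogonal_eq_span_neg {W : Submodule ℝ V} {w : V} (hW : Wᗮ = ℝ ∙ w) : Wᗮ = ℝ ∙ (-w) := by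
  rw [hW, ← Set.neg_singleton, Submodule.span_neg]

section Slice

variable (W : Submodule ℝ V) [W.HasOrthogonalProjection] (w : V)

def tangentConeIn (K : Set V) : Set W := (↑) ⁻¹' tangentCone K w

def tangentTiling (T : Finset (Set V)) : Finset (Set W) :=
  (T.filter (w ∈ ·)).image (tangentConeIn W w)

variable {W w} {C : Finset V}

lemma tangentConeIn_polyhedralCone (hw : w ∈ polyhedralCone C) :
    tangentConeIn W w (polyhedralCone C) =
      polyhedralCone ((C.filter (⟪·, w⟫ = 0)).image W.orthogonalProjectionOnto) := by
  ext y
  simp only [tangentConeIn, mem_preimage, polyhedralCone.mem_tangentCone_iff hw,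
    SetLike.mem_coe, polyhedralCone.mem_iff, Finset.mem_image, Finset.mem_filter]
  constructor
  · rintro h _ ⟨c, ⟨hc, hcw⟩, rfl⟩
    simpa using h c hc hcw
  · intro h c hc hcw
    simpa using h _ ⟨c, ⟨hc, hcw⟩, rfl⟩

lemma isPolyhedralCone_tangentConeIn (hw : w ∈ polyhedralCone C) :
    IsPolyhedralCone (tangentConeIn W w (polyhedralCone C)) :=
  ⟨_, tangentConeIn_polyhedralCone hw⟩

lemma inner_eq_of_sub_mem_span {c x x' : V} (hcw : ⟪c, w⟫ = 0) (h : x - x' ∈ ℝ ∙ w) :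
    ⟪c, x⟫ = ⟪c, x'⟫ := by
  obtain ⟨t, ht⟩ := Submodule.mem_span_singleton.1 h
  rw [← sub_eq_zero, ← inner_sub_right, ← ht, real_inner_smul_right, hcw, mul_zero]

lemma orthogonalProjectionOnto_ne_zero (hW : Wᗮ = ℝ ∙ w) {c : V} (hcw : ⟪c, w⟫ = 0)
    (hc : c ≠ 0) : W.orthogonalProjectionOnto c ≠ 0 := by
  rw [Ne, Submodule.orthogonalProjectionOnto_eq_zero_iff, hW]
  rintro hcW
  obtain ⟨t, rfl⟩ := Submodule.mem_span_singleton.1 hcW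
  refine hc (inner_self_eq_zero (𝕜 := ℝ) |>.1 ?_)
  rw [real_inner_smul_right, hcw, mul_zero]

lemma interior_tangentConeIn (hW : Wᗮ = ℝ ∙ w) (hw : w ∈ polyhedralCone C) :
    interior (tangentConeIn W w (polyhedralCone C)) =
      {y : W | ∀ c ∈ C, ⟪c, w⟫ = 0 → c ≠ 0 → 0 < ⟪c, (y : V)⟫} := by
  rw [tangentConeIn_polyhedralCone hw, polyhedralCone.interior_eq]
  ext y
  simp only [mem_ofPred_eq, Finset.mem_image, Finset.mem_filter]
  constructor
  · intro h c hc hcw hc0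
    simpa using h _ ⟨c, ⟨hc, hcw⟩, rfl⟩ (orthogonalProjectionOnto_ne_zero hW hcw hc0)
  · rintro h _ ⟨c, ⟨hc, hcw⟩, rfl⟩ hc0
    simpa using h c hc hcw fun h0 => hc0 (by simp [h0])

lemma nonempty_interior_tangentConeIn (hW : Wᗮ = ℝ ∙ w) (hw : w ∈ polyhedralCone C)
    (hC : (interior (polyhedralCone C : Set V)).Nonempty) :
    (interior (tangentConeIn W w (polyhedralCone C))).Nonempty := by
  obtain ⟨x, hx⟩ := hC
  rw [polyhedralCone.interior_eq] at hx
  refine ⟨W.orthogonalProjectionOnto x, ?_⟩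
  rw [interior_tangentConeIn hW hw]
  intro c hc hcw hc0
  have hx' : x - (W.orthogonalProjectionOnto x : V) ∈ ℝ ∙ w :=
    hW ▸ W.sub_starProjection_mem_orthogonal x
  rw [← inner_eq_of_sub_mem_span hcw hx']
  exact hx c hc hc0

lemma eventually_add_smul_mem_interior (hW : Wᗮ = ℝ ∙ w) (hw : w ∈ polyhedralCone C) {y : W}
    (hy : y ∈ interior (tangentConeIn W w (polyhedralCone C))) :
    ∀ᶠ ε in 𝓝[>] (0 : ℝ), w + ε • (y : V) ∈ interior (polyhedralCone C : Set V) := by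
  rw [interior_tangentConeIn hW hw] at hy
  filter_upwards [(eventually_forall_inner_add_smul_pos C w y).filter_mono nhdsWithin_le_nhds,
    self_mem_nhdsWithin] with ε hεC hε
  rw [polyhedralCone.interior_eq]
  intro c hc hc0
  rcases (polyhedralCone.mem_iff.1 hw c hc).lt_or_eq with hlt | heq
  · exact hεC c hc hlt
  · rw [inner_add_right, real_inner_smul_right, ← heq, zero_add]
    exact mul_pos hε (hy c hc heq.symm hc0)

end Slice

def IsConeTiling (T : Finset (Set V)) : Prop :=
  (∀ K ∈ T, IsPolyhedralCone K ∧ (interior K).Nonempty) ∧ (⋃ K ∈ T, K) = univ ∧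
    (T : Set (Set V)).Pairwise fun K K' => Disjoint (interior K) (interior K')

namespace IsConeTiling

variable {T : Finset (Set V)} (hT : IsConeTiling T)
include hT

lemma exists_mem_tangentCone (w y : V) : ∃ K ∈ T, w ∈ K ∧ y ∈ tangentCone K w := by
  have hfreq : ∃ K ∈ T, ∃ᶠ ε in 𝓝[>] (0 : ℝ), w + ε • y ∈ K := by
    by_contra! h
    obtain ⟨ε, hε⟩ := ((eventually_all_finset T).2 h).exists
    obtain ⟨K, hK, hmem⟩ := mem_iUnion₂.1 (hT.2.1 ▸ mem_univ (w + ε • y))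
    exact hε K hK hmem
  obtain ⟨K, hK, hfreq⟩ := hfreq
  obtain ⟨C, rfl⟩ := (hT.1 K hK).1
  have hlim : Tendsto (fun ε : ℝ => w + ε • y) (𝓝[>] 0) (𝓝 w) :=
    ((by fun_prop : Continuous fun ε : ℝ => w + ε • y).tendsto' 0 w (by simp)).mono_left
      nhdsWithin_le_nhds
  obtain ⟨ε, hεK, hε⟩ := (hfreq.and_eventually self_mem_nhdsWithin).exists
  exact ⟨_, hK, (polyhedralCone.isClosed C).mem_of_frequently_of_tendsto hfreq hlim, ε, hε, hεK⟩

lemma mem_iff_eq_univ [Subsingleton V] {K : Set V} : K ∈ T ↔ K = univ := by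
  constructor
  · exact fun hK => (hT.1 K hK).2.mono interior_subset |>.eq_univ
  · rintro rfl
    obtain ⟨K, hK, h0⟩ := mem_iUnion₂.1 (hT.2.1 ▸ mem_univ (0 : V))
    exact Set.Nonempty.eq_univ ⟨0, h0⟩ ▸ hK

variable {W : Submodule ℝ V} [W.HasOrthogonalProjection] {w : V} (hW : Wᗮ = ℝ ∙ w)
include hW

lemma disjoint_interior_tangentConeIn {K K' : Set V} (hK : K ∈ T) (hK' : K' ∈ T) (hwK : w ∈ K)
    (hwK' : w ∈ K') (hne : K ≠ K') :
    Disjoint (interior (tangentConeIn W w K)) (interior (tangentConeIn W w K')) := by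
  obtain ⟨C, rfl⟩ := (hT.1 K hK).1
  obtain ⟨C', rfl⟩ := (hT.1 K' hK').1
  refine Set.disjoint_left.2 fun y hy hy' => ?_
  obtain ⟨ε, hε, hε'⟩ := ((eventually_add_smul_mem_interior hW hwK hy).and
    (eventually_add_smul_mem_interior hW hwK' hy')).exists
  exact Set.disjoint_left.1 (hT.2.2 hK hK' hne) hε hε'

lemma tangentConeIn_inj {K K' : Set V} (hK : K ∈ T) (hK' : K' ∈ T) (hwK : w ∈ K)
    (hwK' : w ∈ K') (h : tangentConeIn W w K = tangentConeIn W w K') : K = K' := by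
  by_contra hne
  have hdisj := hT.disjoint_interior_tangentConeIn hW hK hK' hwK hwK' hne
  rw [h, disjoint_self, bot_eq_empty] at hdisj
  obtain ⟨C', rfl⟩ := (hT.1 K' hK').1
  exact (nonempty_interior_tangentConeIn hW hwK' (hT.1 _ hK').2).ne_empty hdisj

lemma tangentTiling_isConeTiling : IsConeTiling (tangentTiling W w T) := by
  refine ⟨?_, ?_, ?_⟩
  · simp only [tangentTiling, Finset.mem_image, Finset.mem_filter]
    rintro _ ⟨K, ⟨hK, hwK⟩, rfl⟩
    obtain ⟨C, rfl⟩ := (hT.1 K hK).1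
    exact ⟨isPolyhedralCone_tangentConeIn hwK,
      nonempty_interior_tangentConeIn hW hwK (hT.1 _ hK).2⟩
  · refine eq_univ_of_forall fun y => ?_
    obtain ⟨K, hK, hwK, hy⟩ := hT.exists_mem_tangentCone w y
    exact mem_iUnion₂.2 ⟨tangentConeIn W w K,
      Finset.mem_image_of_mem _ (Finset.mem_filter.2 ⟨hK, hwK⟩), hy⟩
  · simp only [Set.Pairwise, tangentTiling, Finset.coe_image,
      Finset.coe_filter, mem_image, mem_ofPred_eq]
    rintro _ ⟨K, ⟨hK, hwK⟩, rfl⟩ _ ⟨K', ⟨hK', hwK'⟩, rfl⟩ hne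
    exact hT.disjoint_interior_tangentConeIn hW hK hK' hwK hwK' fun h => hne (h ▸ rfl)

lemma ite_mem_tangentTiling (D : Set W) :
    (if D ∈ tangentTiling W w T ∧ IsSalient D then 1 else 0 : ℤ) =
      ∑ K ∈ T, if w ∈ K ∧ tangentConeIn W w K = D ∧ IsSalient D then 1 else 0 := by
  by_cases hex : ∃ K ∈ T, w ∈ K ∧ tangentConeIn W w K = D ∧ IsSalient D
  · obtain ⟨K, hK, hwK, rfl, hsal⟩ := hex
    rw [if_pos ⟨Finset.mem_image_of_mem _ (Finset.mem_filter.2 ⟨hK, hwK⟩), hsal⟩,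
      Finset.sum_eq_single_of_mem K hK (fun K' hK' hne => if_neg fun h => hne
        (hT.tangentConeIn_inj hW hK' hK h.1 hwK h.2.1)), if_pos ⟨hwK, rfl, hsal⟩]
  · push Not at hex
    rw [Finset.sum_eq_zero fun K hK => if_neg fun h => hex K hK h.1 h.2.1 h.2.2, if_neg]
    rintro ⟨hD, hsal⟩
    obtain ⟨K, hK, rfl⟩ := Finset.mem_image.1 hD
    exact hex K (Finset.mem_filter.1 hK).1 (Finset.mem_filter.1 hK).2 rfl hsal

end IsConeTiling

section ExtremeRay

variable {C : Finset V} {w : V}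

lemma isSalient_tangentConeIn_iff {W : Submodule ℝ V} [W.HasOrthogonalProjection]
    (hW : Wᗮ = ℝ ∙ w) (hw : w ∈ polyhedralCone C) :
    IsSalient (tangentConeIn W w (polyhedralCone C)) ↔ IsExtremeRay (polyhedralCone C) w := by
  constructor
  · intro hsal y hy hy'
    obtain ⟨s, hs⟩ := Submodule.mem_span_singleton.1
      (hW ▸ W.sub_starProjection_mem_orthogonal y)
    set z := W.orthogonalProjectionOnto y
    have hz : (z : V) = y + (-s) • w := by
      rw [neg_smul, ← sub_eq_add_neg, hs, sub_sub_cancel]; rfl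
    have hz' : ((-z : W) : V) = -y + s • w := by
      rw [Submodule.coe_neg, hz]; module
    have hmem : (z : V) ∈ tangentCone (polyhedralCone C) w :=
      hz ▸ polyhedralCone.add_smul_mem_tangentCone hw hy (-s)
    have hmem' : ((-z : W) : V) ∈ tangentCone (polyhedralCone C) w :=
      hz' ▸ polyhedralCone.add_smul_mem_tangentCone hw hy' s
    have h0 : z = 0 := hsal z hmem hmem'
    refine ⟨s, ?_⟩
    have := congrArg Subtype.val h0
    rw [hz, Submodule.coe_zero] at this
    rw [← sub_eq_zero, sub_eq_add_neg, ← neg_smul, this]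
  · intro hext y hy hy'
    obtain ⟨t, ht⟩ := hext y hy hy'
    have hyW : (y : V) ∈ Wᗮ :=
      hW ▸ ht ▸ Submodule.smul_mem _ t (Submodule.mem_span_singleton_self w)
    exact Subtype.ext (inner_self_eq_zero (𝕜 := ℝ) |>.1
      (Submodule.inner_right_of_mem_orthogonal y.2 hyW))

lemma smul_mem_of_neg_mem {K : PointedCone ℝ V} {y : V} (hy : y ∈ K) (hy' : -y ∈ K) (t : ℝ) :
    t • y ∈ K := by
  rcases le_total 0 t with ht | ht
  · exact K.smul_mem ht hy
  · simpa using K.smul_mem (neg_nonneg.2 ht) hy'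

lemma neg_mem_of_not_isSalient (hw : w ∈ polyhedralCone C)
    (hext : IsExtremeRay (polyhedralCone C) w)
    (hK : ¬ IsSalient (polyhedralCone C : Set V)) : -w ∈ polyhedralCone C := by
  simp only [IsSalient, not_forall] at hK
  obtain ⟨y, hy, hy', hy0⟩ := hK
  obtain ⟨t, rfl⟩ := hext y (polyhedralCone.subset_tangentCone hw hy)
    (polyhedralCone.subset_tangentCone hw hy')
  have ht : t ≠ 0 := by rintro rfl; simp at hy0
  simpa [smul_smul, ht] using smul_mem_of_neg_mem hy hy' (-t⁻¹)

end ExtremeRay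

section ExistsExtremeRay

variable {C : Finset V}

lemma inner_sum_pos_of_isSalient (hsal : IsSalient (polyhedralCone C : Set V)) {y : V}
    (hy : y ∈ polyhedralCone C) (hy0 : y ≠ 0) : 0 < ⟪∑ c ∈ C, c, y⟫ := by
  rw [sum_inner]
  have hnonneg : ∀ c ∈ C, 0 ≤ ⟪c, y⟫ := polyhedralCone.mem_iff.1 hy
  refine (Finset.sum_nonneg hnonneg).lt_of_ne fun h => hy0 (hsal y hy ?_)
  have hzero := (Finset.sum_eq_zero_iff_of_nonneg hnonneg).1 h.symm
  exact polyhedralCone.mem_iff.2 fun c hc => by rw [inner_neg_right, hzero c hc, neg_zero]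

lemma isCompact_inter_inner_eq_one [ProperSpace V] {K : PointedCone ℝ V}
    (hK : IsClosed (K : Set V)) {u : V} (hu : ∀ y ∈ K, y ≠ 0 → 0 < ⟪u, y⟫) :
    IsCompact ((K : Set V) ∩ {y | ⟪u, y⟫ = 1}) := by
  have hS : IsCompact ((K : Set V) ∩ sphere 0 1) := (isCompact_sphere 0 1).inter_left hK
  have hcont : ContinuousOn (fun y => ⟪u, y⟫⁻¹ • y) ((K : Set V) ∩ sphere 0 1) := by
    refine ContinuousOn.smul (ContinuousOn.inv₀ (by fun_prop) fun y hy => ?_) continuousOn_id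
    exact (hu y hy.1 (ne_zero_of_mem_unit_sphere ⟨y, hy.2⟩)).ne'
  refine (hS.image_of_continuousOn hcont).of_isClosed_subset
    (hK.inter (isClosed_eq (by fun_prop) continuous_const)) ?_
  rintro y ⟨hyK, hy1⟩
  have hy0 : y ≠ 0 := by rintro rfl; simp at hy1
  refine ⟨‖y‖⁻¹ • y, ⟨K.smul_mem (by positivity) hyK, by simp [norm_smul, hy0]⟩, ?_⟩
  simp only [real_inner_smul_right, hy1.out, mul_one, inv_inv, smul_smul]
  rw [mul_inv_cancel₀ (norm_ne_zero_iff.2 hy0), one_smul]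

lemma exists_isExtremeRay [FiniteDimensional ℝ V] (hsal : IsSalient (polyhedralCone C : Set V))
    {x : V} (hx : x ∈ polyhedralCone C) (hx0 : x ≠ 0) :
    ∃ p ∈ polyhedralCone C, p ≠ 0 ∧ IsExtremeRay (polyhedralCone C) p := by
  set K := polyhedralCone C
  set u := ∑ c ∈ C, c
  have hu : ∀ y ∈ K, y ≠ 0 → 0 < ⟪u, y⟫ := fun y => inner_sum_pos_of_isSalient hsal
  set B := (K : Set V) ∩ {y | ⟪u, y⟫ = 1}
  have hBne : B.Nonempty := ⟨⟪u, x⟫⁻¹ • x, K.smul_mem (inv_nonneg.2 (hu x hx hx0).le) hx,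
    by simp [real_inner_smul_right, (hu x hx hx0).ne']⟩
  -- `B` is a compact base of the salient cone `K`; an extreme point of a base spans an extreme ray.
  have hB : IsCompact B := isCompact_inter_inner_eq_one (polyhedralCone.isClosed C) hu
  obtain ⟨p, hp⟩ := hB.extremePoints_nonempty hBne
  obtain ⟨⟨hpK, hpu⟩, hpext⟩ := mem_extremePoints.1 hp
  refine ⟨p, hpK, by rintro rfl; simp at hpu, fun y hy hy' => ⟨⟪u, y⟫, ?_⟩⟩
  set z := y + (-⟪u, y⟫) • p
  have hz := polyhedralCone.add_smul_mem_tangentCone hpK hy (-⟪u, y⟫)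
  have hz' : -z ∈ tangentCone K p := by
    convert polyhedralCone.add_smul_mem_tangentCone hpK hy' ⟪u, y⟫ using 1
    simp only [z]
    module
  obtain ⟨ε₁, hε₁, hz⟩ := hz
  obtain ⟨ε₂, hε₂, hz'⟩ := hz'
  obtain ⟨ε, h₁, h₂, hε⟩ := ((Convex.eventually_add_smul_mem K.convex hpK hε₁ hz).and
    ((Convex.eventually_add_smul_mem K.convex hpK hε₂ hz').and self_mem_nhdsWithin)).exists
  have huz : ⟪u, z⟫ = 0 := by
    simp [z, inner_add_right, real_inner_smul_right, hpu.out]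
  have hmem : ∀ v, ⟪u, v⟫ = 0 → p + ε • v ∈ K → p + ε • v ∈ B := fun v hv h =>
    ⟨h, by simp [inner_add_right, real_inner_smul_right, hpu.out, hv]⟩
  have hseg : p ∈ openSegment ℝ (p + ε • z) (p + ε • -z) :=
    ⟨1 / 2, 1 / 2, by norm_num, by norm_num, by norm_num, by module⟩
  have hpz := (hpext _ (hmem z huz h₁) _ (hmem (-z) (by simp [huz]) h₂) hseg).1
  have hz0 : z = 0 := by simpa [(show (0 : ℝ) < ε from hε).ne'] using hpz
  rw [← sub_eq_zero, sub_eq_add_neg, ← neg_smul]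
  exact hz0

end ExistsExtremeRay

lemma neg_mem_and_tangentConeIn_neg {W : Submodule ℝ V} [W.HasOrthogonalProjection] {w : V}
    (hW : Wᗮ = ℝ ∙ w) {C : Finset V} (hK : ¬ IsSalient (polyhedralCone C : Set V))
    (hw : w ∈ polyhedralCone C) (hsal : IsSalient (tangentConeIn W w (polyhedralCone C))) :
    -w ∈ polyhedralCone C ∧
      tangentConeIn W (-w) (polyhedralCone C) = tangentConeIn W w (polyhedralCone C) := by
  have hw' := neg_mem_of_not_isSalient hw ((isSalient_tangentConeIn_iff hW hw).1 hsal) hK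
  refine ⟨hw', ?_⟩
  simp only [tangentConeIn, polyhedralCone.tangentCone_eq_self_of_neg_mem hw hw',
    polyhedralCone.tangentCone_eq_self_of_neg_mem hw' (by rwa [neg_neg])]

lemma mem_and_tangentConeIn_eq_iff_neg {W : Submodule ℝ V} [W.HasOrthogonalProjection] {w : V}
    (hW : Wᗮ = ℝ ∙ w) {K : Set V} (hK : IsPolyhedralCone K) (hsal : ¬ IsSalient K) (D : Set W) :
    (w ∈ K ∧ tangentConeIn W w K = D ∧ IsSalient D) ↔
      (-w ∈ K ∧ tangentConeIn W (-w) K = D ∧ IsSalient D) := by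
  obtain ⟨C, rfl⟩ := hK
  constructor
  · rintro ⟨hw, rfl, hsalD⟩
    obtain ⟨hw', hD⟩ := neg_mem_and_tangentConeIn_neg hW hsal hw hsalD
    exact ⟨hw', hD, hsalD⟩
  · rintro ⟨hw, rfl, hsalD⟩
    obtain ⟨hw', hD⟩ := neg_mem_and_tangentConeIn_neg (orthogonal_eq_span_neg hW) hsal hw hsalD
    rw [neg_neg] at hw' hD
    exact ⟨hw', hD, hsalD⟩

section SignedFamily

variable {ι : Type}

def tangentFamily (W : Submodule ℝ V) [W.HasOrthogonalProjection] (w : V)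
    (T : ι → Finset (Set V)) : ι ⊕ ι → Finset (Set W) :=
  Sum.elim (fun i => tangentTiling W w (T i)) (fun i => tangentTiling W (-w) (T i))

lemma isConeTiling_tangentFamily {W : Submodule ℝ V} [W.HasOrthogonalProjection] {w : V}
    (hW : Wᗮ = ℝ ∙ w) {T : ι → Finset (Set V)} (hT : ∀ i, IsConeTiling (T i)) (j : ι ⊕ ι) :
    IsConeTiling (tangentFamily W w T j) := by
  rcases j with i | i
  · exact (hT i).tangentTiling_isConeTiling hW
  · exact (hT i).tangentTiling_isConeTiling (orthogonal_eq_span_neg hW)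

variable [Fintype ι]

def salientCount (T : ι → Finset (Set V)) (m : ι → ℤ) (K : Set V) : ℤ :=
  ∑ i, if K ∈ T i ∧ IsSalient K then m i else 0

omit [InnerProductSpace ℝ V] in
lemma exists_mem_isSalient_of_salientCount_eq_single {T : ι → Finset (Set V)} {m : ι → ℤ}
    {C₀ : Set V} (h : salientCount T m = Pi.single C₀ 1) : ∃ i, C₀ ∈ T i ∧ IsSalient C₀ := by
  have : salientCount T m C₀ ≠ 0 := by simp [h]
  obtain ⟨i, -, hi⟩ := Finset.exists_ne_zero_of_sum_ne_zero this
  exact ⟨i, (ite_ne_right_iff.1 hi).1⟩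

omit [InnerProductSpace ℝ V] in
lemma sum_sum_ite_isSalient_mul {T : ι → Finset (Set V)} {m : ι → ℤ} {C₀ : Set V}
    (h : salientCount T m = Pi.single C₀ 1) (f : Set V → ℤ) :
    ∑ i, ∑ K ∈ T i, (if IsSalient K then m i else 0) * f K = f C₀ := by
  set U := Finset.univ.biUnion T
  have hC₀ : C₀ ∈ U := by
    obtain ⟨i, hi, -⟩ := exists_mem_isSalient_of_salientCount_eq_single h
    exact Finset.mem_biUnion.2 ⟨i, Finset.mem_univ i, hi⟩
  calc ∑ i, ∑ K ∈ T i, (if IsSalient K then m i else 0) * f K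
      = ∑ i, ∑ K ∈ U, (if K ∈ T i ∧ IsSalient K then m i else 0) * f K := by
        refine Finset.sum_congr rfl fun i _ => ?_
        rw [← Finset.sum_subset (Finset.subset_biUnion_of_mem T (Finset.mem_univ i))]
        · exact Finset.sum_congr rfl fun K hK => by simp [hK]
        · intro K _ hK
          simp [hK]
    _ = ∑ K ∈ U, salientCount T m K * f K := by
        rw [Finset.sum_comm]
        simp only [salientCount, Finset.sum_mul]
    _ = f C₀ := by simp [h, Pi.single_apply, hC₀]

lemma salientCount_eq_zero [Subsingleton V] {T : ι → Finset (Set V)} {m : ι → ℤ}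
    (hT : ∀ i, IsConeTiling (T i)) (hm : ∑ i, m i = 0) : salientCount T m = 0 := by
  funext K
  have hsal : IsSalient (univ : Set V) := fun y _ _ => Subsingleton.elim y 0
  by_cases hK : K = univ
  · simp [salientCount, (hT _).mem_iff_eq_univ, hK, hsal, hm]
  · simp [salientCount, (hT _).mem_iff_eq_univ, hK]

variable {W : Submodule ℝ V} [W.HasOrthogonalProjection] {w : V} (hW : Wᗮ = ℝ ∙ w)
  {T : ι → Finset (Set V)} (hT : ∀ i, IsConeTiling (T i))
include hW hT

theorem salientCount_tangentFamily (hw0 : w ≠ 0) {m : ι → ℤ} {C₀ : Set V}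
    (h : salientCount T m = Pi.single C₀ 1) (hwC₀ : w ∈ C₀) (hext : IsExtremeRay C₀ w) :
    salientCount (tangentFamily W w T) (Sum.elim m (-m)) = Pi.single (tangentConeIn W w C₀) 1 := by
  obtain ⟨i₀, hC₀T, hC₀sal⟩ := exists_mem_isSalient_of_salientCount_eq_single h
  obtain ⟨C, rfl⟩ := ((hT i₀).1 _ hC₀T).1
  have hW' := orthogonal_eq_span_neg hW
  have hnw : -w ∉ polyhedralCone C := fun h => hw0 (hC₀sal w hwC₀ h)
  have hsalD₀ := (isSalient_tangentConeIn_iff hW hwC₀).2 hext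
  ext D
  set g : V → Set V → ℤ := fun v K =>
    if v ∈ K ∧ tangentConeIn W v K = D ∧ IsSalient D then 1 else 0
  calc salientCount (tangentFamily W w T) (Sum.elim m (-m)) D
      = ∑ i, m i * ∑ K ∈ T i, (g w K - g (-w) K) := by
        rw [salientCount, Fintype.sum_sum_type, ← Finset.sum_add_distrib]
        refine Finset.sum_congr rfl fun i _ => ?_
        show (if D ∈ tangentTiling W w (T i) ∧ IsSalient D then m i else 0) +
          (if D ∈ tangentTiling W (-w) (T i) ∧ IsSalient D then -m i else 0) = _
        rw [Finset.sum_sub_distrib, ← (hT i).ite_mem_tangentTiling hW D,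
          ← (hT i).ite_mem_tangentTiling hW' D]
        split_ifs <;> ring
    _ = ∑ i, ∑ K ∈ T i, (if IsSalient K then m i else 0) * (g w K - g (-w) K) := by
        refine Finset.sum_congr rfl fun i _ => ?_
        rw [Finset.mul_sum]
        refine Finset.sum_congr rfl fun K hK => ?_
        by_cases hsal : IsSalient K
        · rw [if_pos hsal]
        -- Non-salient tiles contribute equally at `w` and at `-w`.
        · rw [if_neg hsal, zero_mul, sub_eq_zero.2, mul_zero]
          exact if_congr (mem_and_tangentConeIn_eq_iff_neg hW ((hT i).1 K hK).1 hsal D) rfl rfl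
    _ = g w (polyhedralCone C) - g (-w) (polyhedralCone C) := sum_sum_ite_isSalient_mul h _
    _ = (Pi.single (tangentConeIn W w (polyhedralCone C)) 1 : Set W → ℤ) D := by
        by_cases hD : D = tangentConeIn W w (polyhedralCone C)
        · subst hD
          simp [g, hwC₀, hnw, hsalD₀]
        · simp [g, hnw, Ne.symm hD]

end SignedFamily

lemma exists_ne_zero_mem_of_isOpen [Nontrivial V] {U : Set V} (hU : IsOpen U) (hne : U.Nonempty) :
    ∃ x ∈ U, x ≠ 0 := by
  obtain ⟨x, hx⟩ := hne
  rcases eq_or_ne x 0 with rfl | hx0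
  · have hU' : ∀ᶠ y in 𝓝[≠] (0 : V), y ∈ U := mem_nhdsWithin_of_mem_nhds (hU.mem_nhds hx)
    exact (hU'.and self_mem_nhdsWithin).exists
  · exact ⟨x, hx, hx0⟩

variable [FiniteDimensional ℝ V] {ι : Type} [Fintype ι] {T : ι → Finset (Set V)}

lemma exists_salientCount_tangentFamily_eq_single {d : ℕ} (hV : finrank ℝ V = d + 1)
    (hT : ∀ i, IsConeTiling (T i)) {m : ι → ℤ} {C₀ : Set V}
    (h : salientCount T m = Pi.single C₀ 1) :
    ∃ p : V, finrank ℝ (ℝ ∙ p)ᗮ = d ∧ (∀ j, IsConeTiling (tangentFamily (ℝ ∙ p)ᗮ p T j)) ∧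
      ∃ D₀, salientCount (tangentFamily (ℝ ∙ p)ᗮ p T) (Sum.elim m (-m)) = Pi.single D₀ 1 := by
  have : Nontrivial V := Module.nontrivial_of_finrank_eq_succ hV
  have : Fact (finrank ℝ V = d + 1) := ⟨hV⟩
  obtain ⟨i, hC₀T, hsal⟩ := exists_mem_isSalient_of_salientCount_eq_single h
  obtain ⟨⟨C, rfl⟩, hint⟩ := (hT i).1 _ hC₀T
  obtain ⟨x, hx, hx0⟩ := exists_ne_zero_mem_of_isOpen isOpen_interior hint
  obtain ⟨p, hp, hp0, hext⟩ := exists_isExtremeRay hsal (interior_subset hx) hx0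
  have hW := Submodule.orthogonal_orthogonal (ℝ ∙ p)
  exact ⟨p, Submodule.finrank_orthogonal_span_singleton hp0, isConeTiling_tangentFamily hW hT, _,
    salientCount_tangentFamily hW hT hp0 h hp hext⟩

theorem salientCount_ne_single {d : ℕ} (hV : finrank ℝ V = d + 1) (hT : ∀ i, IsConeTiling (T i))
    (m : ι → ℤ) (C₀ : Set V) : salientCount T m ≠ Pi.single C₀ 1 := by
  induction d generalizing V ι with
  | zero =>
    intro h
    obtain ⟨p, hW, hT', D₀, hD₀⟩ := exists_salientCount_tangentFamily_eq_single hV hT h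
    have : Subsingleton (ℝ ∙ p)ᗮ := Module.finrank_zero_iff.1 hW
    rw [salientCount_eq_zero hT' (by simp [Fintype.sum_sum_type])] at hD₀
    simpa using congrFun hD₀ D₀
  | succ d ih =>
    intro h
    obtain ⟨p, hW, hT', D₀, hD₀⟩ := exists_salientCount_tangentFamily_eq_single hV hT h
    exact ih hW hT' _ D₀ hD₀

end PolyhedralTiling

open PolyhedralTiling

def coneOver {n : ℕ} (Q : Set (Euc n)) : Set (Euc n) := {y | y = 0 ∨ ‖y‖⁻¹ • y ∈ Q}

section ConeOver

variable {n : ℕ} {Q : Set (Euc n)}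

lemma inv_norm_smul_mem_unitSphere {y : Euc n} (hy : y ≠ 0) : ‖y‖⁻¹ • y ∈ unitSphere n := by
  simp [unitSphere, norm_smul, hy]

lemma inv_norm_smul_of_mem_unitSphere {y : Euc n} (hy : y ∈ unitSphere n) : ‖y‖⁻¹ • y = y := by
  simp [mem_sphere_zero_iff_norm.1 hy]

lemma coneOver_eq_polyhedralCone {C : Finset (Euc n)}
    (hQ : Q = unitSphere n ∩ ⋂ c ∈ C, {y : Euc n | 0 ≤ ⟪c, y⟫}) :
    coneOver Q = polyhedralCone C := by
  ext y
  rcases eq_or_ne y 0 with rfl | hy0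
  · simp [coneOver]
  · have hpos : 0 < ‖y‖⁻¹ := inv_pos.2 (norm_pos_iff.2 hy0)
    simp [coneOver, hy0, hQ, inv_norm_smul_mem_unitSphere hy0, polyhedralCone.mem_iff,
      real_inner_smul_right, mul_nonneg_iff_of_pos_left hpos]

lemma isSalient_coneOver_iff (hQ : Q ⊆ unitSphere n) : IsSalient (coneOver Q) ↔ ¬ IsBType Q := by
  constructor
  · rintro hsal ⟨x, hx, hx'⟩
    have hx1 := inv_norm_smul_of_mem_unitSphere (hQ hx)
    have hx0 := ne_zero_of_mem_unit_sphere ⟨x, hQ hx⟩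
    refine hx0 (hsal x (Or.inr (hx1.symm ▸ hx)) (Or.inr ?_))
    rwa [norm_neg, smul_neg, hx1]
  · intro hB y hy hy'
    by_contra hy0
    exact hB ⟨_, hy.resolve_left hy0, by
      simpa [norm_neg, smul_neg] using hy'.resolve_left (neg_ne_zero.2 hy0)⟩

lemma nonempty_interior_coneOver (hQ : Q ⊆ unitSphere n) (h : (sphInterior Q).Nonempty) :
    (interior (coneOver Q)).Nonempty := by
  obtain ⟨z, hz, ε, hε, hball⟩ := h
  have hz0 : z ≠ 0 := ne_zero_of_mem_unit_sphere ⟨z, hQ hz⟩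
  have hopen : IsOpen ({0}ᶜ ∩ (fun y : Euc n => ‖y‖⁻¹ • y) ⁻¹' ball z ε) :=
    ContinuousOn.isOpen_inter_preimage
      (ContinuousOn.smul (ContinuousOn.inv₀ (by fun_prop) fun y hy => norm_ne_zero_iff.2 hy)
        continuousOn_id) isOpen_compl_singleton isOpen_ball
  refine ⟨z, mem_interior.2 ⟨_, ?_, hopen, hz0, ?_⟩⟩
  · rintro y ⟨hy0, hy⟩
    exact Or.inr (hball _ (inv_norm_smul_mem_unitSphere hy0) hy)
  · simp [inv_norm_smul_of_mem_unitSphere (hQ hz), hε]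

lemma inv_norm_smul_mem_sphInterior {x : Euc n} (hx : x ∈ interior (coneOver Q)) (hx0 : x ≠ 0) :
    ‖x‖⁻¹ • x ∈ sphInterior Q := by
  have hnorm : ‖x‖ ≠ 0 := norm_ne_zero_iff.2 hx0
  have hscale : ‖x‖ • (‖x‖⁻¹ • x) = x := by rw [smul_smul, mul_inv_cancel₀ hnorm, one_smul]
  have hnhds : (fun y : Euc n => ‖x‖ • y) ⁻¹' interior (coneOver Q) ∈ 𝓝 (‖x‖⁻¹ • x) :=
    (by fun_prop : Continuous fun y : Euc n => ‖x‖ • y).continuousAt.preimage_mem_nhds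
      (hscale.symm ▸ isOpen_interior.mem_nhds hx)
  obtain ⟨ε, hε, hball⟩ := Metric.mem_nhds_iff.1 hnhds
  refine ⟨(interior_subset hx).resolve_left hx0, ε, hε, fun y hyS hy => ?_⟩
  have hy0 : y ≠ 0 := ne_zero_of_mem_unit_sphere ⟨y, hyS⟩
  have hmem := (interior_subset (hball hy) : ‖x‖ • y ∈ coneOver Q).resolve_left
    (smul_ne_zero hnorm hy0)
  rwa [norm_smul, norm_norm, mul_inv, smul_smul, mul_comm, ← mul_assoc,
    mul_inv_cancel₀ hnorm, one_mul, inv_norm_smul_of_mem_unitSphere hyS] at hmem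

lemma IsSphTiling.subset_unitSphere {𝒯 : Finset (Set (Euc n))} (h𝒯 : IsSphTiling 𝒯)
    (hQ : Q ∈ 𝒯) : Q ⊆ unitSphere n := by
  obtain ⟨⟨C, rfl⟩, -⟩ := h𝒯.1 Q hQ
  exact inter_subset_left

lemma IsSphTiling.isConeTiling_image_coneOver [Nontrivial (Euc n)] {𝒯 : Finset (Set (Euc n))}
    (h𝒯 : IsSphTiling 𝒯) : IsConeTiling (𝒯.image coneOver) := by
  have hcover : ∀ y : Euc n, y ≠ 0 → ∃ Q ∈ 𝒯, ‖y‖⁻¹ • y ∈ Q := fun y hy => by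
    have hy' := inv_norm_smul_mem_unitSphere hy
    rw [← h𝒯.2.1] at hy'
    simpa using hy'
  refine ⟨?_, eq_univ_of_forall fun y => ?_, ?_⟩
  · simp only [Finset.mem_image]
    rintro _ ⟨Q, hQ, rfl⟩
    obtain ⟨⟨C, hC⟩, hint⟩ := h𝒯.1 Q hQ
    exact ⟨⟨C, coneOver_eq_polyhedralCone hC⟩,
      nonempty_interior_coneOver (h𝒯.subset_unitSphere hQ) hint⟩
  · rcases eq_or_ne y 0 with rfl | hy0
    · obtain ⟨v, hv⟩ := exists_ne (0 : Euc n)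
      obtain ⟨Q, hQ, -⟩ := hcover v hv
      exact mem_iUnion₂.2 ⟨_, Finset.mem_image_of_mem _ hQ, Or.inl rfl⟩
    · obtain ⟨Q, hQ, hyQ⟩ := hcover y hy0
      exact mem_iUnion₂.2 ⟨_, Finset.mem_image_of_mem _ hQ, Or.inr hyQ⟩
  · simp only [Finset.coe_image]
    rintro _ ⟨Q, hQ, rfl⟩ _ ⟨Q', hQ', rfl⟩ hne
    refine Set.disjoint_iff_inter_eq_empty.2 (Set.not_nonempty_iff_eq_empty.1 fun hint => ?_)
    obtain ⟨x, ⟨hx, hx'⟩, hx0⟩ :=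
      exists_ne_zero_mem_of_isOpen (isOpen_interior.inter isOpen_interior) hint
    have hdisj := h𝒯.2.2 Q hQ Q' hQ' fun h => hne (h ▸ rfl)
    exact hdisj.subset ⟨inv_norm_smul_mem_sphInterior hx hx0, inv_norm_smul_mem_sphInterior hx' hx0⟩

end ConeOver

theorem no_tiling_with_exactly_one_atype (n : ℕ) (𝒯 : Finset (Set (Euc n)))
    (h𝒯 : IsSphTiling 𝒯) :
    ¬ ∃ P ∈ 𝒯, ¬ IsBType P ∧ ∀ Q ∈ 𝒯, ¬ IsBType Q → Q = P := by
  rintro ⟨P, hP, hPA, huniq⟩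
  obtain ⟨z, hz, -⟩ := (h𝒯.1 P hP).2
  have : Nontrivial (Euc n) :=
    nontrivial_of_ne z 0 (ne_zero_of_mem_unit_sphere ⟨z, h𝒯.subset_unitSphere hP hz⟩)
  obtain ⟨d, hd⟩ := Nat.exists_eq_succ_of_ne_zero (finrank_pos (R := ℝ) (M := Euc n)).ne'
  have hsalient : ∀ K, K ∈ 𝒯.image coneOver ∧ IsSalient K ↔ K = coneOver P := fun K => by
    simp only [Finset.mem_image]
    constructor
    · rintro ⟨⟨Q, hQ, rfl⟩, hsal⟩
      rw [huniq Q hQ ((isSalient_coneOver_iff (h𝒯.subset_unitSphere hQ)).1 hsal)]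
    · rintro rfl
      exact ⟨⟨P, hP, rfl⟩, (isSalient_coneOver_iff (h𝒯.subset_unitSphere hP)).2 hPA⟩
  refine salientCount_ne_single hd (fun _ : Unit => h𝒯.isConeTiling_image_coneOver) 1
    (coneOver P) (funext fun K => ?_)
  simp only [salientCount, Finset.univ_unique, Finset.sum_singleton, Pi.one_apply, hsalient,
    Pi.single_apply]
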